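/- Every nonempty finite intersection in the category of sets is absolute: if B, B' ⊆ A are subsets with B ∩ B' ≠ ∅, then the pullback square formed by the inclusions of B ∩ B', B, B' into A is preserved by every functor from Set to any category. -/

import Mathlib

open CategoryTheory Limits

universe v₁ v₂ u₁ u₂

namespace CategoryTheory

variable {C : Type u₁} [Category.{v₁} C] {P X Y Z : C}

/-- Data exhibiting a square as an absolute pullback: the lift of a cone `(a, b)` is
`a ≫ retraction`, the equations are what make it a lift, and being equations between composites
they survive any functor. -/
structure IsSplitPullback (fst : P ⟶ X) (snd : P ⟶ Y) (f : X ⟶ Z) (g : Y ⟶ Z) where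
  retraction : X ⟶ P
  leftRetraction : Z ⟶ X
  rightRetraction : Z ⟶ Y
  comparison : Z ⟶ X
  condition : fst ≫ f = snd ≫ g
  fst_retraction : fst ≫ retraction = 𝟙 P
  f_leftRetraction : f ≫ leftRetraction = 𝟙 X
  g_rightRetraction : g ≫ rightRetraction = 𝟙 Y
  retraction_fst : retraction ≫ fst = f ≫ comparison
  retraction_snd : retraction ≫ snd = f ≫ rightRetraction
  g_comparison : g ≫ comparison = g ≫ leftRetraction

namespace IsSplitPullback

variable {fst : P ⟶ X} {snd : P ⟶ Y} {f : X ⟶ Z} {g : Y ⟶ Z}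

def map {D : Type u₂} [Category.{v₂} D] (h : IsSplitPullback fst snd f g) (F : C ⥤ D) :
    IsSplitPullback (F.map fst) (F.map snd) (F.map f) (F.map g) where
  retraction := F.map h.retraction
  leftRetraction := F.map h.leftRetraction
  rightRetraction := F.map h.rightRetraction
  comparison := F.map h.comparison
  condition := by simp only [← F.map_comp, h.condition]
  fst_retraction := by rw [← F.map_comp, h.fst_retraction, F.map_id]
  f_leftRetraction := by rw [← F.map_comp, h.f_leftRetraction, F.map_id]
  g_rightRetraction := by rw [← F.map_comp, h.g_rightRetraction, F.map_id]
  retraction_fst := by simp only [← F.map_comp, h.retraction_fst]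
  retraction_snd := by simp only [← F.map_comp, h.retraction_snd]
  g_comparison := by simp only [← F.map_comp, h.g_comparison]

theorem isPullback (h : IsSplitPullback fst snd f g) : IsPullback fst snd f g :=
  .of_isLimit <| PullbackCone.IsLimit.mk h.condition (fun s => s.fst ≫ h.retraction)
    (fun s => by
      rw [Category.assoc, h.retraction_fst, s.condition_assoc, h.g_comparison,
        ← s.condition_assoc, h.f_leftRetraction, Category.comp_id])
    (fun s => by
      rw [Category.assoc, h.retraction_snd, s.condition_assoc, h.g_rightRetraction,
        Category.comp_id])
    (fun s m hfst _ => by rw [← hfst, Category.assoc, h.fst_retraction, Category.comp_id])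

end IsSplitPullback

end CategoryTheory

namespace Set

variable {α : Type u₁}

open Classical in
noncomputable def retraction (s : Set α) (x₀ : s) (a : α) : s :=
  if h : a ∈ s then ⟨a, h⟩ else x₀

theorem retraction_of_mem {s : Set α} (x₀ : s) {a : α} (h : a ∈ s) :
    s.retraction x₀ a = ⟨a, h⟩ := by
  simp [retraction, h]

theorem retraction_of_notMem {s : Set α} (x₀ : s) {a : α} (h : a ∉ s) :
    s.retraction x₀ a = x₀ := by
  simp [retraction, h]

@[simp]
theorem retraction_coe {s : Set α} (x₀ x : s) : s.retraction x₀ x = x :=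
  retraction_of_mem x₀ x.2

theorem coe_retraction_inter_of_mem_left {s t : Set α} (x₀ : ↥(s ∩ t)) {a : α} (ha : a ∈ s) :
    ((s ∩ t).retraction x₀ a : α) = t.retraction (inclusion inter_subset_right x₀) a := by
  by_cases hat : a ∈ t
  · rw [retraction_of_mem (s := s ∩ t) _ ⟨ha, hat⟩, retraction_of_mem _ hat]
  · rw [retraction_of_notMem (s := s ∩ t) _ (fun h => hat h.2), retraction_of_notMem _ hat]

theorem coe_retraction_inter_of_mem_right {s t : Set α} (x₀ : ↥(s ∩ t)) {a : α} (ha : a ∈ t) :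
    ((s ∩ t).retraction x₀ a : α) = s.retraction (inclusion inter_subset_left x₀) a := by
  by_cases has : a ∈ s
  · rw [retraction_of_mem (s := s ∩ t) _ ⟨has, ha⟩, retraction_of_mem _ has]
  · rw [retraction_of_notMem (s := s ∩ t) _ (fun h => has h.1), retraction_of_notMem _ has]

/-- Nonemptiness enters here: each retraction sends the points outside its target to `x₀`. -/
noncomputable def interIsSplitPullback {s t : Set α} (x₀ : ↥(s ∩ t)) :
    IsSplitPullback (C := Type u₁)
      (TypeCat.ofHom (inclusion inter_subset_left)) (TypeCat.ofHom (inclusion inter_subset_right))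
      (TypeCat.ofHom ((↑) : s → α)) (TypeCat.ofHom ((↑) : t → α)) where
  retraction := TypeCat.ofHom fun a => (s ∩ t).retraction x₀ a
  leftRetraction := TypeCat.ofHom (s.retraction (inclusion inter_subset_left x₀))
  rightRetraction := TypeCat.ofHom (t.retraction (inclusion inter_subset_right x₀))
  comparison := TypeCat.ofHom fun a => inclusion inter_subset_left ((s ∩ t).retraction x₀ a)
  condition := rfl
  fst_retraction := by ext; simp
  f_leftRetraction := by ext; simp
  g_rightRetraction := by ext; simp
  retraction_fst := rfl
  retraction_snd := by ext a; exact coe_retraction_inter_of_mem_left x₀ a.2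
  g_comparison := by ext a; exact coe_retraction_inter_of_mem_right x₀ a.2

end Set

theorem stmt13 {A : Type u} (B B' : Set A) (hne : (B ∩ B').Nonempty)
    {D : Type v} [Category.{w} D] (F : Type u ⥤ D) :
    IsPullback
      (F.map (X := ↥(B ∩ B')) (Y := ↥B) (TypeCat.ofHom (fun x => ⟨(x : A), x.2.1⟩)))
      (F.map (X := ↥(B ∩ B')) (Y := ↥B') (TypeCat.ofHom (fun x => ⟨(x : A), x.2.2⟩)))
      (F.map (X := ↥B) (Y := A) (TypeCat.ofHom (fun x => (x : A))))
      (F.map (X := ↥B') (Y := A) (TypeCat.ofHom (fun x => (x : A)))) :=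
  ((Set.interIsSplitPullback ⟨_, hne.some_mem⟩).map F).isPullback
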